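/- Let G be a connected simple graph of order n with 5 ≤ n ≤ 7 such that rvd(G) = 1 (equivalently, G is a tree) and such that the complement Ḡ is connected. Then rvd(Ḡ) ≥ n−2. -/

import Mathlib

open SimpleGraph

/-- The graph obtained from `G` by removing (isolating) the vertices of `S`.
Since in our uses the endpoints of interest never lie in `S`, reachability
between them in this graph agrees with reachability in `G - S`. -/
def SimpleGraph.delVerts {V : Type*} (G : SimpleGraph V) (S : Set V) : SimpleGraph V where
  Adj u v := G.Adj u v ∧ u ∉ S ∧ v ∉ S
  symm := ⟨fun u v h => ⟨h.1.symm, h.2.2, h.2.1⟩⟩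
  loopless := ⟨fun v h => G.loopless.irrefl v h.1⟩

/-- `c` is a rainbow vertex-disconnection coloring of `G`: every two distinct
vertices `x, y` admit an `x`-`y` rainbow vertex-cut. -/
def SimpleGraph.IsRVDColoring {V α : Type*} (G : SimpleGraph V) (c : V → α) : Prop :=
  ∀ x y : V, x ≠ y → ∃ S : Set V, x ∉ S ∧ y ∉ S ∧
    (¬ G.Adj x y → ¬ (G.delVerts S).Reachable x y ∧ Set.InjOn c S) ∧
    (G.Adj x y → ¬ ((G.deleteEdges {s(x, y)}).delVerts S).Reachable x y ∧
      (Set.InjOn c (S ∪ {x}) ∨ Set.InjOn c (S ∪ {y})))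

/-- The rainbow vertex-disconnection number of `G`: the minimum number of colors
in a rainbow vertex-disconnection coloring of `G`. -/
noncomputable def SimpleGraph.rvd {V : Type*} (G : SimpleGraph V) : ℕ :=
  sInf {k | ∃ c : V → Fin k, G.IsRVDColoring c}

/-!
A coloring with one color is rainbow only on singletons, so the cuts it provides are empty and
every edge of `G` is a bridge: `G` is a tree. A tree on at least five vertices has two leaves
`u`, `v` whose neighbours `a`, `b` are equal or nonadjacent (otherwise the leaf neighbours are
distinct and pairwise adjacent, so there are only two leaves and `G` is the path `u a b v`).
In `Gᶜ` the vertices `u`, `v` are adjacent, and a rainbow cut `S` for them satisfies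
`|S| + 1 ≤ k`. Any vertex `w ∉ S ∪ {u, v, a, b}` gives the path `u w v` in `Gᶜ - uv`, and `a`, `b`
together give `u b a v`; so at most one vertex lies outside `S ∪ {u, v}`, and
`n ≤ |S| + 3 ≤ k + 2`.
-/

namespace SimpleGraph

variable {V : Type*} {G : SimpleGraph V}

@[simp]
lemma delVerts_adj {S : Set V} {x y : V} :
    (G.delVerts S).Adj x y ↔ G.Adj x y ∧ x ∉ S ∧ y ∉ S := Iff.rfl

@[simp]
lemma delVerts_empty : G.delVerts ∅ = G := by
  ext
  simp

lemma not_reachable_delVerts_compl_pair {x y : V} (hxy : x ≠ y) (h : ¬ G.Adj x y) :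
    ¬ (G.delVerts {x, y}ᶜ).Reachable x y := by
  rintro ⟨_ | ⟨⟨hxz, -, hz⟩, -⟩⟩
  · exact hxy rfl
  · rw [Set.notMem_compl_iff] at hz
    obtain rfl | rfl := hz
    exacts [G.loopless.irrefl _ hxz, h hxz]

lemma isRVDColoring_of_injective {α : Type*} {c : V → α} (hc : c.Injective) :
    G.IsRVDColoring c := by
  intro x y hxy
  refine ⟨{x, y}ᶜ, by simp, by simp,
    fun h => ⟨not_reachable_delVerts_compl_pair hxy h, hc.injOn⟩,
    fun _ => ⟨not_reachable_delVerts_compl_pair hxy (by simp), Or.inl hc.injOn⟩⟩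

lemma IsRVDColoring.not_reachable_deleteEdges {α : Type*} [Subsingleton α] {c : V → α}
    (hc : G.IsRVDColoring c) {x y : V} (h : G.Adj x y) :
    ¬ (G.deleteEdges {s(x, y)}).Reachable x y := by
  obtain ⟨S, hxS, hyS, -, hcut⟩ := hc x y h.ne
  obtain ⟨hcut, hinj⟩ := hcut h
  suffices hS : S = ∅ by rwa [hS, delVerts_empty] at hcut
  refine Set.eq_empty_of_forall_notMem fun s hs => ?_
  rcases hinj with hinj | hinj
  · exact hxS (hinj (Or.inl hs) (Or.inr rfl) (Subsingleton.elim _ _) ▸ hs)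
  · exact hyS (hinj (Or.inl hs) (Or.inr rfl) (Subsingleton.elim _ _) ▸ hs)

lemma isAcyclic_of_rvd_eq_one (h : G.rvd = 1) : G.IsAcyclic := by
  obtain ⟨c, hc⟩ : ∃ c : V → Fin 1, G.IsRVDColoring c :=
    h ▸ Nat.sInf_mem (Nat.nonempty_of_sInf_eq_succ h)
  exact isAcyclic_iff_forall_adj_isBridge.mpr fun _ _ hxy => hc.not_reachable_deleteEdges hxy

lemma le_rvd [Fintype V] {m : ℕ} (h : ∀ k (c : V → Fin k), G.IsRVDColoring c → m ≤ k) :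
    m ≤ G.rvd :=
  le_csInf ⟨_, _, isRVDColoring_of_injective (Fintype.equivFin V).injective⟩
    fun k ⟨c, hc⟩ => h k c hc

lemma exists_adj_iff_eq_of_degree_eq_one {u : V} [Fintype (G.neighborSet u)]
    (h : G.degree u = 1) : ∃ a, ∀ w, G.Adj u w ↔ w = a := by
  obtain ⟨a, ha, huniq⟩ := degree_eq_one_iff_existsUnique_adj.mp h
  exact ⟨a, fun w => ⟨huniq w, (· ▸ ha)⟩⟩

lemma eq_or_eq_of_adj_of_degree_eq_two {x y z : V} [Fintype (G.neighborSet x)]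
    (h : G.degree x = 2) (hy : G.Adj x y) (hz : G.Adj x z) (hyz : y ≠ z) :
    ∀ w, G.Adj x w → w = y ∨ w = z := by
  classical
  have hN : G.neighborFinset x = {y, z} :=
    (Finset.eq_of_subset_of_card_le (by simp [Finset.insert_subset_iff, hy, hz])
      (by rw [card_neighborFinset_eq_degree, h, Finset.card_pair hyz])).symm
  intro w hw
  simpa [hN] using (mem_neighborFinset G x w).mpr hw

lemma Preconnected.card_le_of_adj_closed [Fintype V] (hG : G.Preconnected) {s : Finset V}
    (hs : ∀ x ∈ s, ∀ y, G.Adj x y → y ∈ s) {u : V} (hu : u ∈ s) : Fintype.card V ≤ s.card := by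
  have hall : ∀ v, v ∈ s := fun v => by
    obtain ⟨p⟩ := hG u v
    induction p with
    | nil => exact hu
    | cons h _ ih => exact ih (hs _ hu _ h)
  exact Finset.card_le_card fun v _ => hall v

lemma IsTree.degree_eq_two_of_forall_degree_eq_one [Fintype V] [DecidableRel G.Adj]
    (hG : G.IsTree) {u v : V} (huv : u ≠ v) (hleaf : ∀ x, G.degree x = 1 → x = u ∨ x = v)
    {x : V} (hxu : x ≠ u) (hxv : x ≠ v) : G.degree x = 2 := by
  classical
  have : Nontrivial V := ⟨u, v, huv⟩
  -- `g` bounds the degree from below and has the same sum `2n - 2`, so the bound is attained.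
  let g : V → ℕ := fun y => if y = u ∨ y = v then 1 else 2
  have hle : ∀ y ∈ Finset.univ, g y ≤ G.degree y := by
    intro y _
    have := hG.connected.preconnected.degree_pos_of_nontrivial y
    by_cases hy : y = u ∨ y = v
    · simp only [g, hy, if_true]; omega
    · have := mt (hleaf y) hy
      simp only [g, hy, if_false]; omega
  have hsum : ∑ y, g y = ∑ y, G.degree y := by
    have hpair : Finset.univ.filter (fun y => y = u ∨ y = v) = {u, v} := by ext; simp
    have hsplit := Finset.card_filter_add_card_filter_not
      (s := Finset.univ) (fun y => y = u ∨ y = v)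
    have hedges := hG.card_edgeFinset
    rw [sum_degrees_eq_twice_card_edges, Finset.sum_ite, Finset.sum_const, Finset.sum_const,
      hpair, Finset.card_pair huv]
    rw [hpair, Finset.card_pair huv, Finset.card_univ] at hsplit
    simp only [smul_eq_mul]
    omega
  simpa [g, hxu, hxv] using ((Finset.sum_eq_sum_iff_of_le hle).mp hsum x (Finset.mem_univ x)).symm

lemma IsTree.card_le_four_of_forall_degree_eq_one [Fintype V] [DecidableRel G.Adj]
    (hG : G.IsTree) {u v a b : V} (huv : u ≠ v) (hu : ∀ w, G.Adj u w ↔ w = a)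
    (hv : ∀ w, G.Adj v w ↔ w = b) (hnadj : ¬ G.Adj u v) (hab : G.Adj a b)
    (hleaf : ∀ x, G.degree x = 1 → x = u ∨ x = v) : Fintype.card V ≤ 4 := by
  classical
  have hua : G.Adj u a := (hu a).2 rfl
  have hvb : G.Adj v b := (hv b).2 rfl
  have hav : a ≠ v := by rintro rfl; exact hnadj hua
  have hbu : b ≠ u := by rintro rfl; exact hnadj hvb.symm
  have hNa := eq_or_eq_of_adj_of_degree_eq_two
    (hG.degree_eq_two_of_forall_degree_eq_one huv hleaf hua.ne' hav) hua.symm hab hbu.symm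
  have hNb := eq_or_eq_of_adj_of_degree_eq_two
    (hG.degree_eq_two_of_forall_degree_eq_one huv hleaf hbu hvb.ne') hvb.symm hab.symm hav.symm
  refine (hG.connected.preconnected.card_le_of_adj_closed (s := {u, v, a, b}) ?_
    (Finset.mem_insert_self u _)).trans Finset.card_le_four
  simp only [Finset.mem_insert, Finset.mem_singleton]
  rintro x (rfl | rfl | rfl | rfl) y hxy
  · exact Or.inr (Or.inr (Or.inl ((hu y).1 hxy)))
  · exact Or.inr (Or.inr (Or.inr ((hv y).1 hxy)))
  · rcases hNa y hxy with rfl | rfl <;> simp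
  · rcases hNb y hxy with rfl | rfl <;> simp

lemma IsTree.exists_leaves_eq_or_not_adj [Fintype V] (hG : G.IsTree)
    (hcard : 5 ≤ Fintype.card V) :
    ∃ u v a b, u ≠ v ∧ (∀ w, G.Adj u w ↔ w = a) ∧ (∀ w, G.Adj v w ↔ w = b) ∧
      (a = b ∨ ¬ G.Adj a b) := by
  classical
  have : Nontrivial V := Fintype.one_lt_card_iff_nontrivial.mp (by omega)
  obtain ⟨u, v, huv, hu1, hv1⟩ := hG.exists_ne_and_degree_eq_one
  obtain ⟨a, hu⟩ := exists_adj_iff_eq_of_degree_eq_one hu1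
  obtain ⟨b, hv⟩ := exists_adj_iff_eq_of_degree_eq_one hv1
  by_cases hab : a = b ∨ ¬ G.Adj a b
  · exact ⟨u, v, a, b, huv, hu, hv, hab⟩
  push Not at hab
  by_cases hthird : ∃ w, G.degree w = 1 ∧ w ≠ u ∧ w ≠ v
  · obtain ⟨w, hw1, hwu, hwv⟩ := hthird
    obtain ⟨e, hw⟩ := exists_adj_iff_eq_of_degree_eq_one hw1
    by_cases hae : a = e ∨ ¬ G.Adj a e
    · exact ⟨u, w, a, e, hwu.symm, hu, hw, hae⟩
    by_cases hbe : b = e ∨ ¬ G.Adj b e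
    · exact ⟨v, w, b, e, hwv.symm, hv, hw, hbe⟩
    push Not at hae hbe
    exact absurd (is3Clique_triple_iff.mpr ⟨hab.2, hae.2, hbe.2⟩)
      (hG.isAcyclic.cliqueFree le_rfl _)
  · push Not at hthird
    have hnadj : ¬ G.Adj u v := fun h => by
      have := hG.connected.preconnected.card_le_of_adj_closed (s := {u, v}) ?_
        (Finset.mem_insert_self u _)
      · have := Finset.card_le_two (a := u) (b := v)
        omega
      simp only [Finset.mem_insert, Finset.mem_singleton]
      rintro x (rfl | rfl) y hxy
      · exact Or.inr (((hu y).1 hxy).trans ((hu v).1 h).symm)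
      · exact Or.inl (((hv y).1 hxy).trans ((hv u).1 h.symm).symm)
    have := hG.card_le_four_of_forall_degree_eq_one huv hu hv hnadj hab.2
      fun x hx => or_iff_not_imp_left.mpr (hthird x hx)
    omega

lemma subsingleton_compl_of_not_reachable_compl {u v a b : V} {S : Set V}
    (hu : ∀ w, G.Adj u w ↔ w = a) (hv : ∀ w, G.Adj v w ↔ w = b) (hab : a = b ∨ ¬ G.Adj a b)
    (huS : u ∉ S) (hvS : v ∉ S)
    (hcut : ¬ ((Gᶜ.deleteEdges {s(u, v)}).delVerts S).Reachable u v) :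
    (S ∪ {u, v})ᶜ.Subsingleton := by
  have hK : ∀ p q, p ≠ q → ¬ G.Adj p q → p ∉ S → q ∉ S → s(p, q) ≠ s(u, v) →
      ((Gᶜ.deleteEdges {s(u, v)}).delVerts S).Reachable p q := fun p q hpq hG hp hq he =>
    Adj.reachable (by simp [hpq, hG, hp, hq, he])
  have hmid : ∀ w ∈ (S ∪ {u, v})ᶜ, w = a ∨ w = b := by
    intro w hw
    simp only [Set.mem_compl_iff, Set.mem_union, Set.mem_insert_iff, Set.mem_singleton_iff,
      not_or] at hw
    obtain ⟨hwS, hwu, hwv⟩ := hw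
    by_contra! hwab
    refine hcut ((hK u w (Ne.symm hwu) ?_ huS hwS ?_).trans (hK w v hwv ?_ hwS hvS ?_))
    all_goals simp_all [adj_comm, eq_comm]
  intro w₁ h₁ w₂ h₂
  by_contra hw
  obtain ⟨hne, ha, hb⟩ : a ≠ b ∧ a ∈ (S ∪ {u, v})ᶜ ∧ b ∈ (S ∪ {u, v})ᶜ := by
    rcases hmid w₁ h₁ with rfl | rfl <;> rcases hmid w₂ h₂ with rfl | rfl
    exacts [absurd rfl hw, ⟨hw, h₁, h₂⟩, ⟨Ne.symm hw, h₂, h₁⟩, absurd rfl hw]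
  simp only [Set.mem_compl_iff, Set.mem_union, Set.mem_insert_iff, Set.mem_singleton_iff,
    not_or] at ha hb
  refine hcut (((hK u b ?_ ?_ huS hb.1 ?_).trans (hK b a ?_ ?_ hb.1 ha.1 ?_)).trans
    (hK a v ?_ ?_ ha.1 hvS ?_))
  all_goals simp_all [adj_comm, eq_comm]

lemma card_sub_two_le_of_isRVDColoring_compl [Fintype V] {u v a b : V} (huv : u ≠ v)
    (hu : ∀ w, G.Adj u w ↔ w = a) (hv : ∀ w, G.Adj v w ↔ w = b) (hab : a = b ∨ ¬ G.Adj a b)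
    {k : ℕ} {c : V → Fin k} (hc : Gᶜ.IsRVDColoring c) :
    Fintype.card V - 2 ≤ k := by
  have hnadj : ¬ G.Adj u v := fun h => by
    obtain rfl := (hu v).1 h
    obtain rfl := (hv u).1 h.symm
    exact hab.elim huv.symm (· h.symm)
  obtain ⟨S, huS, hvS, -, hcut⟩ := hc u v huv
  obtain ⟨hcut, hrainbow⟩ := hcut ((compl_adj G u v).mpr ⟨huv, hnadj⟩)
  have hS : S.ncard + 1 ≤ k := by
    obtain ⟨x, hxS, hinj⟩ : ∃ x ∉ S, Set.InjOn c (S ∪ {x}) :=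
      hrainbow.elim (⟨u, huS, ·⟩) (⟨v, hvS, ·⟩)
    calc S.ncard + 1 = (S ∪ {x}).ncard := by
          rw [Set.union_singleton, Set.ncard_insert_of_notMem hxS]
      _ ≤ (Set.univ : Set (Fin k)).ncard :=
          Set.ncard_le_ncard_of_injOn c (fun _ _ => Set.mem_univ _) hinj Set.finite_univ
      _ = k := by simp
  have hrest := Set.ncard_le_one_iff_subsingleton.mpr
    (subsingleton_compl_of_not_reachable_compl hu hv hab huS hvS hcut)
  have hpair : (S ∪ {u, v}).ncard ≤ S.ncard + 2 :=
    (Set.ncard_union_le _ _).trans (by rw [Set.ncard_pair huv])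
  have hsplit := Set.ncard_add_ncard_compl (S ∪ {u, v})
  rw [Nat.card_eq_fintype_card] at hsplit
  omega

end SimpleGraph

theorem rvd_compl_ge_of_tree_small_general {V : Type*} [Fintype V] (G : SimpleGraph V)
    (hG : G.Connected)
    (h5 : 5 ≤ Fintype.card V) (h1 : G.rvd = 1) :
    Fintype.card V - 2 ≤ Gᶜ.rvd := by
  obtain ⟨u, v, a, b, huv, hu, hv, hab⟩ :=
    (⟨hG, isAcyclic_of_rvd_eq_one h1⟩ : G.IsTree).exists_leaves_eq_or_not_adj h5
  exact le_rvd fun _ _ hc => card_sub_two_le_of_isRVDColoring_compl huv hu hv hab hc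

/-- If `G` is a connected graph of order `n` with `5 ≤ n ≤ 7`, `rvd(G) = 1`
(i.e. `G` is a tree), and the complement `Ḡ` is connected, then
`rvd(Ḡ) ≥ n - 2`. -/
theorem rvd_compl_ge_of_tree_small {V : Type*} [Fintype V] (G : SimpleGraph V)
    (hG : G.Connected) (hGc : Gᶜ.Connected)
    (h5 : 5 ≤ Fintype.card V) (h7 : Fintype.card V ≤ 7) (h1 : G.rvd = 1) :
    Fintype.card V - 2 ≤ Gᶜ.rvd :=
  rvd_compl_ge_of_tree_small_general G hG h5 h1
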